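/- Let b > 0, let n ≥ 2 be an integer, and let X_1, …, X_n be i.i.d. real-valued random variables with P(X_i ≥ x) = 10^{−b x} for all x ≥ 0 (so each X_i is a.s. nonnegative with continuous distribution). Let M = max_{1≤i≤n} X_i be the largest value and M₁ = min_{1≤i≤n} ( max_{j≠i} X_j ) be the second largest value. Then for every ν ≥ 0, P( M − M₁ ≥ ν ) = 10^{−b ν}; that is, the gap between the largest and second-largest values follows the same Gutenberg–Richter law as each X_i. -/

import Mathlib

/-!
The gap `M - M₁` is at least `ν ≥ 0` exactly when some `X i` exceeds the maximum `Z i` of the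
other variables by `ν`. Ties have probability zero because the laws are atomless, so these events
are almost surely disjoint. As `X i` is independent of `Z i ≥ 0` and its tail `G x = 10^{-bx}` is
memoryless, `P(Z i + ν ≤ X i) = E[G(Z i)] · G ν`. Summing over `i`, the gap has tail `c · G ν`,
and `c = 1` by taking `ν = 0`.
-/

open MeasureTheory ProbabilityTheory Filter Set Topology
open scoped ENNReal

section OrderStatistics

variable {ι : Type*} (x : ι → ℝ)

noncomputable def maxExcept (i : ι) : ℝ := ⨆ j : {j // j ≠ i}, x j

noncomputable def secondMax : ℝ := ⨅ i, maxExcept x i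

variable {x}

lemma maxExcept_le [Nontrivial ι] {i : ι} {t : ℝ} (h : ∀ j ≠ i, x j ≤ t) :
    maxExcept x i ≤ t :=
  have : Nonempty {j // j ≠ i} := nonempty_subtype.2 (exists_ne i)
  ciSup_le fun j => h j j.2

variable [Finite ι]

lemma le_maxExcept {i j : ι} (h : j ≠ i) : x j ≤ maxExcept x i :=
  le_ciSup (f := fun j : {j // j ≠ i} => x j) (finite_range _).bddAbove ⟨j, h⟩

lemma eq_of_maxExcept_le_of_maxExcept_le {i j : ι} (hij : i ≠ j) (hi : maxExcept x i ≤ x i)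
    (hj : maxExcept x j ≤ x j) : x i = x j :=
  le_antisymm ((le_maxExcept hij).trans hj) ((le_maxExcept hij.symm).trans hi)

variable [Nontrivial ι]

lemma secondMax_le_iSup : secondMax x ≤ ⨆ i, x i := by
  obtain ⟨i⟩ := (inferInstance : Nonempty ι)
  exact (ciInf_le (finite_range _).bddBelow i).trans
    (maxExcept_le fun j _ => le_ciSup (finite_range _).bddAbove j)

lemma iSup_eq_and_secondMax_eq_of_forall_le {i : ι} (hi : ∀ j, x j ≤ x i) :
    ⨆ j, x j = x i ∧ secondMax x = maxExcept x i := by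
  refine ⟨le_antisymm (ciSup_le hi) (le_ciSup (finite_range _).bddAbove i),
    le_antisymm (ciInf_le (finite_range _).bddBelow i) (le_ciInf fun k => ?_)⟩
  rcases eq_or_ne k i with rfl | hk
  · rfl
  · exact (maxExcept_le fun j _ => hi j).trans (le_maxExcept hk.symm)

lemma le_iSup_sub_secondMax_iff {ν : ℝ} (hν : 0 ≤ ν) :
    ν ≤ (⨆ i, x i) - secondMax x ↔ ∃ i, maxExcept x i + ν ≤ x i := by
  constructor
  · intro h
    obtain ⟨i, hi⟩ := Finite.exists_max x
    obtain ⟨hsup, hsecond⟩ := iSup_eq_and_secondMax_eq_of_forall_le hi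
    exact ⟨i, by linarith⟩
  · rintro ⟨i, hi⟩
    have hmax : ∀ j, x j ≤ x i := fun j => by
      rcases eq_or_ne j i with rfl | hj
      · rfl
      · linarith [le_maxExcept (x := x) hj]
    obtain ⟨hsup, hsecond⟩ := iSup_eq_and_secondMax_eq_of_forall_le hmax
    linarith

end OrderStatistics

namespace ProbabilityTheory

section Tails

variable {Ω : Type*} [MeasurableSpace Ω] {P : Measure Ω} {Y Z : Ω → ℝ} {G : ℝ → ℝ≥0∞}

lemma measure_eq_eq_zero_of_continuousWithinAt_tail [IsFiniteMeasure P] (hY : Measurable Y)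
    {x : ℝ} (hG : ContinuousWithinAt G (Ioi x) x) (htail : ∀ y ≥ x, P {ω | y ≤ Y ω} = G y) :
    P {ω | Y ω = x} = 0 := by
  have hbound : ∀ y > x, P {ω | Y ω = x} ≤ G x - G y := fun y hy => by
    rw [← htail x le_rfl, ← htail y hy.le]
    calc P {ω | Y ω = x} ≤ P ({ω | x ≤ Y ω} \ {ω | y ≤ Y ω}) :=
          measure_mono fun ω (h : Y ω = x) => ⟨h.ge, fun h' : y ≤ Y ω => by linarith⟩
      _ = _ := measure_sdiff (fun ω (h : y ≤ Y ω) => hy.le.trans h)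
          (measurableSet_le measurable_const hY).nullMeasurableSet (measure_ne_top _ _)
  have hlim : Tendsto (fun y => G x - G y) (𝓝[>] x) (𝓝 0) := by
    have := ENNReal.Tendsto.sub tendsto_const_nhds hG
      (Or.inl (htail x le_rfl ▸ measure_ne_top _ _))
    rwa [tsub_self] at this
  exact nonpos_iff_eq_zero.1 (ge_of_tendsto hlim (eventually_nhdsWithin_of_forall hbound))

lemma ae_nonneg_of_tail [IsProbabilityMeasure P] (hY : Measurable Y) (hG0 : G 0 = 1)
    (htail : ∀ x ≥ 0, P {ω | x ≤ Y ω} = G x) : ∀ᵐ ω ∂P, 0 ≤ Y ω :=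
  (ae_iff_measure_eq (measurableSet_le measurable_const hY).nullMeasurableSet).2 <| by
    rw [htail 0 le_rfl, hG0, measure_univ]

lemma nullSingletonClass_map_of_continuous_tail [IsProbabilityMeasure P] (hY : Measurable Y)
    (hG : Continuous G) (hG0 : G 0 = 1) (htail : ∀ x ≥ 0, P {ω | x ≤ Y ω} = G x) :
    NullSingletonClass (P.map Y) where
  measure_singleton x := by
    rw [Measure.map_apply hY (measurableSet_singleton x)]
    rcases lt_or_ge x 0 with hx | hx
    · refine measure_mono_null (fun ω (h : Y ω = x) => ?_)
        (ae_iff.1 (ae_nonneg_of_tail hY hG0 htail))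
      exact fun h0 : 0 ≤ Y ω => by linarith
    · exact measure_eq_eq_zero_of_continuousWithinAt_tail hY hG.continuousWithinAt
        fun y hy => htail y (hx.trans hy)

lemma IndepFun.measure_eq_eq_zero [IsFiniteMeasure P] (hind : IndepFun Y Z P)
    (hY : Measurable Y) (hZ : Measurable Z) [NullSingletonClass (P.map Z)] :
    P {ω | Y ω = Z ω} = 0 := by
  have hdiag : MeasurableSet {p : ℝ × ℝ | p.1 = p.2} :=
    measurableSet_eq_fun measurable_fst measurable_snd
  change P ((fun ω => (Y ω, Z ω)) ⁻¹' {p | p.1 = p.2}) = 0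
  rw [← Measure.map_apply (hY.prodMk hZ) hdiag,
    hind.map_prod_eq_prod_map_map hY.aemeasurable hZ.aemeasurable, Measure.prod_apply hdiag]
  simp

lemma IndepFun.measure_add_le_eq_lintegral_mul [IsFiniteMeasure P] (hind : IndepFun Y Z P)
    (hY : Measurable Y) (hZ : Measurable Z) (hZ0 : ∀ᵐ ω ∂P, 0 ≤ Z ω)
    (htail : ∀ x ≥ 0, P {ω | x ≤ Y ω} = G x)
    (hGadd : ∀ x y, 0 ≤ x → 0 ≤ y → G (x + y) = G x * G y) {ν : ℝ} (hν : 0 ≤ ν) :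
    P {ω | Z ω + ν ≤ Y ω} = (∫⁻ z, G z ∂P.map Z) * G ν := by
  have hs : MeasurableSet {p : ℝ × ℝ | p.2 + ν ≤ p.1} :=
    measurableSet_le (by fun_prop) (by fun_prop)
  have hsection : ∀ᵐ z ∂P.map Z, P.map Y (Ici (z + ν)) = G z * G ν := by
    filter_upwards [(ae_map_iff hZ.aemeasurable measurableSet_Ici).2 hZ0] with z hz
    rw [Measure.map_apply hY measurableSet_Ici, ← hGadd z ν hz hν]
    exact htail _ (add_nonneg hz hν)
  change P ((fun ω => (Y ω, Z ω)) ⁻¹' {p | p.2 + ν ≤ p.1}) = _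
  rw [← Measure.map_apply (hY.prodMk hZ) hs,
    hind.map_prod_eq_prod_map_map hY.aemeasurable hZ.aemeasurable, Measure.prod_apply_symm hs]
  exact (lintegral_congr_ae hsection).trans
    (lintegral_mul_const' _ _ (htail ν hν ▸ measure_ne_top _ _))

end Tails

section GapLaw

variable {Ω ι : Type*} [MeasurableSpace Ω] {P : Measure Ω} {X : ι → Ω → ℝ}

lemma measurable_maxExcept [Finite ι] (hX : ∀ i, Measurable (X i)) (i : ι) :
    Measurable fun ω => maxExcept (X · ω) i :=
  Measurable.iSup fun j => hX j

lemma iIndepFun.indepFun_maxExcept [Fintype ι] (hindep : iIndepFun X P)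
    (hX : ∀ i, Measurable (X i)) (i : ι) :
    IndepFun (X i) (fun ω => maxExcept (X · ω) i) P := by
  classical
  have hothers : Measurable fun g : ({i}ᶜ : Finset ι) → ℝ =>
      ⨆ j : {j // j ≠ i}, g ⟨j, by simpa using j.2⟩ :=
    Measurable.iSup fun _ => measurable_pi_apply _
  exact (hindep.indepFun_finset {i} {i}ᶜ disjoint_compl_right hX).comp
    (measurable_pi_apply ⟨i, Finset.mem_singleton_self i⟩) hothers

theorem iIndepFun.measure_le_iSup_sub_secondMax [IsProbabilityMeasure P] [Fintype ι]
    [Nontrivial ι] (hX : ∀ i, Measurable (X i)) (hindep : iIndepFun X P) {G : ℝ → ℝ≥0∞}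
    (hG : Continuous G) (hG0 : G 0 = 1) (hGadd : ∀ x y, 0 ≤ x → 0 ≤ y → G (x + y) = G x * G y)
    (htail : ∀ i, ∀ x ≥ 0, P {ω | x ≤ X i ω} = G x) {ν : ℝ} (hν : 0 ≤ ν) :
    P {ω | ν ≤ (⨆ i, X i ω) - secondMax (X · ω)} = G ν := by
  set Z : ι → Ω → ℝ := fun i ω => maxExcept (X · ω) i
  have hZ0 : ∀ i, ∀ᵐ ω ∂P, 0 ≤ Z i ω := fun i => by
    obtain ⟨j, hj⟩ := exists_ne i
    filter_upwards [ae_nonneg_of_tail (hX j) hG0 (htail j)] with ω hω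
    exact hω.trans (le_maxExcept (x := (X · ω)) hj)
  have hatoms : ∀ i, NullSingletonClass (P.map (X i)) := fun i =>
    nullSingletonClass_map_of_continuous_tail (hX i) hG hG0 (htail i)
  have hgap : ∀ t ≥ 0,
      P {ω | t ≤ (⨆ i, X i ω) - secondMax (X · ω)} = (∑' i, ∫⁻ z, G z ∂P.map (Z i)) * G t := by
    intro t ht
    have hunion :
        {ω | t ≤ (⨆ i, X i ω) - secondMax (X · ω)} = ⋃ i, {ω | Z i ω + t ≤ X i ω} := by
      ext ω
      simpa using le_iSup_sub_secondMax_iff ht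
    have hdisj : Pairwise (Function.onFun (AEDisjoint P) fun i => {ω | Z i ω + t ≤ X i ω}) :=
      fun i j hij => measure_mono_null
        (fun ω ⟨(hi : Z i ω + t ≤ X i ω), (hj : Z j ω + t ≤ X j ω)⟩ =>
          eq_of_maxExcept_le_of_maxExcept_le (x := (X · ω)) hij (by linarith) (by linarith))
        ((hindep.indepFun hij).measure_eq_eq_zero (hX i) (hX j))
    rw [hunion, measure_iUnion₀ hdisj fun i =>
        (measurableSet_le ((measurable_maxExcept hX i).add_const t) (hX i)).nullMeasurableSet,
      ← ENNReal.tsum_mul_right]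
    exact tsum_congr fun i => (hindep.indepFun_maxExcept hX i).measure_add_le_eq_lintegral_mul
      (hX i) (measurable_maxExcept hX i) (hZ0 i) (htail i) hGadd ht
  have hsum : ∑' i, ∫⁻ z, G z ∂P.map (Z i) = 1 := by
    simpa [secondMax_le_iSup, hG0] using (hgap 0 le_rfl).symm
  rw [hgap ν hν, hsum, one_mul]

end GapLaw

end ProbabilityTheory

noncomputable def gutenbergRichterTail (b x : ℝ) : ℝ≥0∞ := ENNReal.ofReal (10 ^ (-(b * x)))

lemma continuous_gutenbergRichterTail (b : ℝ) : Continuous (gutenbergRichterTail b) :=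
  ENNReal.continuous_ofReal.comp
    (continuous_const.rpow (by fun_prop) fun _ => Or.inl (by norm_num))

lemma gutenbergRichterTail_zero (b : ℝ) : gutenbergRichterTail b 0 = 1 := by
  simp [gutenbergRichterTail]

lemma gutenbergRichterTail_add (b x y : ℝ) :
    gutenbergRichterTail b (x + y) = gutenbergRichterTail b x * gutenbergRichterTail b y := by
  rw [gutenbergRichterTail, gutenbergRichterTail, gutenbergRichterTail,
    ← ENNReal.ofReal_mul (by positivity), ← Real.rpow_add (by norm_num), mul_add, neg_add]

theorem extremal_gutenberg_richter_law
    {Ω : Type*} [MeasurableSpace Ω] (P : Measure Ω) [IsProbabilityMeasure P]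
    (b : ℝ) (n : ℕ) (hn : 2 ≤ n)
    (X : Fin n → Ω → ℝ) (hXmeas : ∀ i, Measurable (X i))
    (hlaw : ∀ i, ∀ x ≥ (0 : ℝ),
      P {ω | x ≤ X i ω} = ENNReal.ofReal ((10 : ℝ) ^ (-(b * x))))
    (hindep : iIndepFun X P)
    (M M₁ : Ω → ℝ)
    (hM : ∀ ω, M ω = ⨆ i, X i ω)
    (hM₁ : ∀ ω, M₁ ω = ⨅ i, ⨆ j : {j : Fin n // j ≠ i}, X (j : Fin n) ω) :
    ∀ ν ≥ (0 : ℝ), P {ω | ν ≤ M ω - M₁ ω} = ENNReal.ofReal ((10 : ℝ) ^ (-(b * ν))) := by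
  intro ν hν
  have : Nontrivial (Fin n) := Fin.nontrivial_iff_two_le.2 hn
  simp only [hM, hM₁]
  exact hindep.measure_le_iSup_sub_secondMax hXmeas (continuous_gutenbergRichterTail b)
    (gutenbergRichterTail_zero b) (fun x y _ _ => gutenbergRichterTail_add b x y) hlaw hν
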